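/- Let Γ be a finite connected simple graph with vertex set V, let 𝒯 and 𝒯̃ be maximal tubings of Γ, and let w and w̃ be their weight vectors. Then, as functions V → ℤ, w̃ − w = Σ_{T ∈ 𝒯} m_T · (1_{v_T} − 1_{v_{σ(T)}}), where m_T = Σ_{v ∈ T} (w̃(v) − w(v)) ≥ 0 for every T ∈ 𝒯, v_T is the unique vertex of T not contained in any element of 𝒯 properly contained in T, and σ(T) is the minimal element of 𝒯 ∪ {V} properly containing T. (Equivalently, for positive reals (x_v)_{v∈V}: ∏_v x_v^{w̃(v)−w(v)} = ∏_{T∈𝒯} (x_{v_T}/x_{v_{σ(T)}})^{m_T} with all exponents m_T nonnegative.) -/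

import Mathlib

variable {V : Type*} [Fintype V] [DecidableEq V]

/-- A tube of a simple graph: a nonempty proper subset of vertices whose
induced subgraph is connected. -/
def IsTube (G : SimpleGraph V) (T : Finset V) : Prop :=
  T.Nonempty ∧ T ≠ Finset.univ ∧ (G.induce (T : Set V)).Connected

/-- A tubing: a set of tubes, pairwise either properly nested or disjoint with
no edge between them. -/
def IsTubing (G : SimpleGraph V) (𝒯 : Finset (Finset V)) : Prop :=
  (∀ T ∈ 𝒯, IsTube G T) ∧
  ∀ T ∈ 𝒯, ∀ T' ∈ 𝒯, T ≠ T' →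
    T ⊂ T' ∨ T' ⊂ T ∨
      ((∀ v ∈ T, v ∉ T') ∧ ∀ u ∈ T, ∀ v ∈ T', ¬ G.Adj u v)

/-- A maximal tubing: one not properly contained in any other tubing. -/
def IsMaxTubing (G : SimpleGraph V) (𝒯 : Finset (Finset V)) : Prop :=
  IsTubing G 𝒯 ∧ ∀ 𝒯' : Finset (Finset V), IsTubing G 𝒯' → 𝒯 ⊆ 𝒯' → 𝒯' = 𝒯

/-- `w` is the weight vector of the maximal tubing `𝒯`: for each vertex `v`,
if the minimal element `T` of `𝒯 ∪ {univ}` containing `v` is the singleton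
`{v}` then `w v = 0`, and otherwise (`|T| ≥ 2`)
`w v = 3^(|T|-2) - ∑_{v' ∈ T, v' ≠ v} w v'`. -/
def IsWeightVector (𝒯 : Finset (Finset V)) (w : V → ℤ) : Prop :=
  ∀ v : V, ∀ T ∈ insert Finset.univ 𝒯, v ∈ T →
    (∀ S ∈ insert Finset.univ 𝒯, v ∈ S → T ⊆ S) →
    (T = {v} → w v = 0) ∧
    (2 ≤ T.card → w v = 3 ^ (T.card - 2) - ∑ v' ∈ T.erase v, w v')

/-- The indicator function of a vertex, with values in `ℤ`. -/
def indic (a u : V) : ℤ := if u = a then 1 else 0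


/-!
Write `f = tubeWeight`: `f k = 3 ^ (k - 2)` for `k ≥ 2` and `f 0 = f 1 = 0`. In a maximal
tubing every `A ∈ 𝒯 ∪ {V}` has exactly one vertex `v_A` outside the tubes below it, and the
maximal tubes `C ⊊ A` partition `A \ {v_A}`. Hence `∑_{v ∈ A} w v = f |A|`, and as `f` is
superadditive with `2 f k ≤ f (k + 1)`, `w v_A = f |A| - ∑_C f |C| ≥ f (|A| - 1) ≥ 0`.
For a tube `T ∈ 𝒯` let `A` be the smallest member of `𝒯' ∪ {V}` containing it; connectivity of
`T` forces `v_A ∈ T`, so either `T = A` or, since `w' ≥ 0`,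
`∑_{v ∈ T} w' v ≥ w' v_A ≥ f (|A| - 1) ≥ f |T| = ∑_{v ∈ T} w v`. This is `m_T ≥ 0`.
With `d = w' - w`, the identity is checked at each vertex `u = v_B`: only the term of `B` and
those of its maximal subtubes survive, leaving `∑_B d - ∑_{B \ {u}} d = d u`
(for `B = V` because `∑_V d = 0`).
-/

open Finset

namespace SimpleGraph

variable {α : Type*} {G : SimpleGraph α}

theorem subset_of_induce_connected {T C : Set α} (hT : (G.induce T).Connected) {t : α}
    (htT : t ∈ T) (htC : t ∈ C) (hC : ∀ x ∈ T, ∀ y ∈ T, x ∈ C → G.Adj x y → y ∈ C) :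
    T ⊆ C := by
  intro y hyT
  by_contra hyC
  obtain ⟨p⟩ := hT.preconnected ⟨t, htT⟩ ⟨y, hyT⟩
  obtain ⟨d, -, hd, hd'⟩ := p.exists_boundary_dart {x | x.1 ∈ C} htC hyC
  exact hd' (hC _ d.fst.2 _ d.snd.2 hd d.adj)

theorem exists_subset_of_induce_connected [DecidableEq α] {T : Finset α} {P : Finset (Finset α)}
    (hT : (G.induce (T : Set α)).Connected) (hTP : T ⊆ P.biUnion id)
    (hP : ∀ C ∈ P, ∀ C' ∈ P, C ≠ C' → ∀ x ∈ C, ∀ y ∈ C', ¬ G.Adj x y) :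
    ∃ C ∈ P, T ⊆ C := by
  obtain ⟨⟨t, htT⟩⟩ := hT.nonempty
  obtain ⟨C, hC, htC⟩ := mem_biUnion.1 (hTP htT)
  refine ⟨C, hC, subset_of_induce_connected hT htT htC fun x _ y hyT hxC hxy => ?_⟩
  obtain ⟨C', hC', hyC'⟩ := mem_biUnion.1 (hTP hyT)
  by_contra hyC
  exact hP C hC C' hC' (by rintro rfl; exact hyC hyC') x hxC y hyC' hxy

theorem exists_induce_connected_closed {U : Finset α} {u : α} (hu : u ∈ U) :
    ∃ S ⊆ U, u ∈ S ∧ (G.induce (S : Set α)).Connected ∧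
      ∀ x ∈ S, ∀ y ∈ U, G.Adj x y → y ∈ S := by
  classical
  set 𝒮 : Finset (Finset α) :=
    U.powerset.filter fun S => u ∈ S ∧ (G.induce (S : Set α)).Connected
  have hu' : {u} ∈ 𝒮 := by
    simp [𝒮, singleton_subset_iff.2 hu, Connected.of_subsingleton]
  obtain ⟨S, hS, hSmax⟩ := Finset.exists_maximal ⟨_, hu'⟩
  simp only [𝒮, mem_filter, mem_powerset] at hS hSmax
  obtain ⟨hSU, huS, hSconn⟩ := hS
  refine ⟨S, hSU, huS, hSconn, fun x hxS y hyU hxy => ?_⟩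
  have hconn : (G.induce ((S ∪ {y} : Finset α) : Set α)).Connected := by
    rw [coe_union, coe_singleton]
    exact connected_induce_union hSconn.preconnected Preconnected.of_subsingleton hxS rfl hxy
  exact hSmax ⟨union_subset hSU (singleton_subset_iff.2 hyU), mem_union_left _ huS, hconn⟩
    subset_union_left (mem_union_right _ (mem_singleton_self y))

end SimpleGraph

section Compatibility

variable {α : Type*} {G : SimpleGraph α} {𝒯 : Finset (Finset α)} {A S T : Finset α} {v : α}

def AreSeparated (G : SimpleGraph α) (T T' : Finset α) : Prop :=
  (∀ v ∈ T, v ∉ T') ∧ ∀ u ∈ T, ∀ v ∈ T', ¬ G.Adj u v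

def AreCompatible (G : SimpleGraph α) (T T' : Finset α) : Prop :=
  T ⊂ T' ∨ T' ⊂ T ∨ AreSeparated G T T'

/-- `v` is the vertex `v_A` of the paper. -/
def IsFree (𝒯 : Finset (Finset α)) (A : Finset α) (v : α) : Prop :=
  v ∈ A ∧ ∀ S ∈ 𝒯, S ⊂ A → v ∉ S

def maxSubtubes [DecidableEq α] (𝒯 : Finset (Finset α)) (A : Finset α) : Finset (Finset α) :=
  𝒯.filter fun C => C ⊂ A ∧ ∀ S ∈ 𝒯, C ⊂ S → ¬ S ⊂ A

theorem AreSeparated.symm (h : AreSeparated G S T) : AreSeparated G T S :=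
  ⟨fun x hxT hxS => h.1 x hxS hxT, fun x hxT y hyS hxy => h.2 y hyS x hxT hxy.symm⟩

theorem AreSeparated.disjoint (h : AreSeparated G S T) : Disjoint S T :=
  disjoint_left.2 h.1

theorem AreSeparated.mono_left (h : AreSeparated G A T) (hSA : S ⊆ A) : AreSeparated G S T :=
  ⟨fun x hx => h.1 x (hSA hx), fun x hx => h.2 x (hSA hx)⟩

theorem AreCompatible.symm (h : AreCompatible G S T) : AreCompatible G T S := by
  rcases h with h | h | h
  exacts [Or.inr (Or.inl h), Or.inl h, Or.inr (Or.inr h.symm)]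

variable [DecidableEq α]

theorem mem_maxSubtubes :
    T ∈ maxSubtubes 𝒯 A ↔ T ∈ 𝒯 ∧ T ⊂ A ∧ ∀ S ∈ 𝒯, T ⊂ S → ¬ S ⊂ A :=
  mem_filter

theorem exists_mem_maxSubtubes (hS : S ∈ 𝒯) (hSA : S ⊂ A) (hv : v ∈ S) :
    ∃ C ∈ maxSubtubes 𝒯 A, v ∈ C := by
  obtain ⟨C, hC, hCmax⟩ := Finset.exists_maximal (s := 𝒯.filter fun C => v ∈ C ∧ C ⊂ A)
    ⟨S, mem_filter.2 ⟨hS, hv, hSA⟩⟩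
  simp only [mem_filter] at hC hCmax
  exact ⟨C, mem_maxSubtubes.2 ⟨hC.1, hC.2.2, fun S' hS' hCS' hS'A =>
    hCS'.2 (hCmax ⟨hS', hCS'.1 hC.2.1, hS'A⟩ hCS'.1)⟩, hC.2.1⟩

end Compatibility

variable {G : SimpleGraph V} {𝒯 : Finset (Finset V)} {A B S T : Finset V} {u v : V}

theorem IsTubing.insert_of_compatible (ht : IsTubing G 𝒯) (hS : IsTube G S)
    (hST : ∀ T ∈ 𝒯, T ≠ S → AreCompatible G S T) : IsTubing G (insert S 𝒯) := by
  refine ⟨fun T hT => ?_, fun T hT T' hT' hTT' => ?_⟩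
  · rcases mem_insert.1 hT with rfl | hT
    exacts [hS, ht.1 T hT]
  rcases mem_insert.1 hT with rfl | hT𝒯
  · exact hST T' ((mem_insert.1 hT').resolve_left hTT'.symm) hTT'.symm
  rcases mem_insert.1 hT' with rfl | hT'𝒯
  · exact (hST T hT𝒯 hTT').symm
  · exact ht.2 T hT𝒯 T' hT'𝒯 hTT'

theorem IsTubing.areSeparated_of_disjoint (ht : IsTubing G 𝒯) (hA : A ∈ insert univ 𝒯)
    (hT : T ∈ 𝒯) (hAT : Disjoint A T) : AreSeparated G A T := by
  obtain ⟨t, htT⟩ := (ht.1 T hT).1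
  rcases mem_insert.1 hA with rfl | hA
  · exact absurd htT (disjoint_left.1 hAT (mem_univ t))
  obtain ⟨a, haA⟩ := (ht.1 A hA).1
  rcases ht.2 A hA T hT (by rintro rfl; exact disjoint_left.1 hAT htT htT) with h | h | h
  · exact absurd (h.1 haA) (disjoint_left.1 hAT haA)
  · exact absurd htT (disjoint_left.1 hAT (h.1 htT))
  · exact h

theorem IsTubing.subset_or_subset (ht : IsTubing G 𝒯) (hA : A ∈ insert univ 𝒯)
    (hB : B ∈ insert univ 𝒯) (hAB : ¬ Disjoint A B) : A ⊆ B ∨ B ⊆ A := by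
  rcases mem_insert.1 hA with rfl | hA𝒯
  · exact Or.inr (subset_univ B)
  rcases mem_insert.1 hB with rfl | hB𝒯
  · exact Or.inl (subset_univ A)
  by_cases hAB' : A = B
  · exact Or.inl hAB'.subset
  rcases ht.2 A hA𝒯 B hB𝒯 hAB' with h | h | h
  exacts [Or.inl h.1, Or.inr h.1, absurd (AreSeparated.disjoint h) hAB]

theorem IsTubing.induce_connected (hG : G.Connected) (ht : IsTubing G 𝒯)
    (hA : A ∈ insert univ 𝒯) : (G.induce (A : Set V)).Connected := by
  rcases mem_insert.1 hA with rfl | hA𝒯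
  · rw [coe_univ]
    exact (SimpleGraph.induceUnivIso G).connected_iff.2 hG
  · exact (ht.1 A hA𝒯).2.2

theorem IsTubing.exists_minimal_superset (ht : IsTubing G 𝒯) (hS : S.Nonempty) :
    ∃ A ∈ insert univ 𝒯, S ⊆ A ∧ ∀ B ∈ insert univ 𝒯, S ⊆ B → A ⊆ B := by
  obtain ⟨A, hA, hAmin⟩ := Finset.exists_minimal (s := (insert univ 𝒯).filter (S ⊆ ·))
    ⟨univ, mem_filter.2 ⟨mem_insert_self _ _, subset_univ S⟩⟩
  simp only [mem_filter] at hA hAmin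
  refine ⟨A, hA.1, hA.2, fun B hB hSB => ?_⟩
  obtain ⟨x, hx⟩ := hS
  rcases ht.subset_or_subset hA.1 hB (not_disjoint_iff.2 ⟨x, hA.2 hx, hSB hx⟩) with h | h
  exacts [h, hAmin ⟨hB, hSB⟩ h]

theorem IsFree.subset_of_mem (ht : IsTubing G 𝒯) (hA : A ∈ insert univ 𝒯) (hv : IsFree 𝒯 A v)
    (hB : B ∈ insert univ 𝒯) (hvB : v ∈ B) : A ⊆ B := by
  rcases ht.subset_or_subset hA hB (not_disjoint_iff.2 ⟨v, hv.1, hvB⟩) with h | h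
  · exact h
  by_contra hAB
  rcases mem_insert.1 hB with rfl | hB𝒯
  · exact hAB (subset_univ A)
  exact hv.2 B hB𝒯 (h.ssubset_of_not_subset hAB) hvB

theorem IsTubing.eq_of_isFree (ht : IsTubing G 𝒯) (hA : A ∈ insert univ 𝒯)
    (hB : B ∈ insert univ 𝒯) (hvA : IsFree 𝒯 A v) (hvB : IsFree 𝒯 B v) : A = B :=
  (hvA.subset_of_mem ht hA hB hvB.1).antisymm (hvB.subset_of_mem ht hB hA hvA.1)

theorem IsTubing.exists_isFree_tube (ht : IsTubing G 𝒯) (v : V) :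
    ∃ A ∈ insert univ 𝒯, IsFree 𝒯 A v := by
  obtain ⟨A, hA, hvA, hAmin⟩ := ht.exists_minimal_superset (singleton_nonempty v)
  exact ⟨A, hA, singleton_subset_iff.1 hvA, fun S hS hSA hvS =>
    hSA.2 (hAmin S (mem_insert_of_mem hS) (singleton_subset_iff.2 hvS))⟩

theorem IsTubing.areSeparated_of_mem_maxSubtubes (ht : IsTubing G 𝒯) {C C' : Finset V}
    (hC : C ∈ maxSubtubes 𝒯 A) (hC' : C' ∈ maxSubtubes 𝒯 A) (hCC' : C ≠ C') :
    AreSeparated G C C' := by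
  rw [mem_maxSubtubes] at hC hC'
  rcases ht.2 C hC.1 C' hC'.1 hCC' with h | h | h
  · exact absurd hC'.2.1 (hC.2.2 C' hC'.1 h)
  · exact absurd hC.2.1 (hC'.2.2 C hC.1 h)
  · exact h

theorem IsTubing.pairwiseDisjoint_maxSubtubes (ht : IsTubing G 𝒯) :
    (maxSubtubes 𝒯 A : Set (Finset V)).PairwiseDisjoint id :=
  fun _ hC _ hC' hCC' => (ht.areSeparated_of_mem_maxSubtubes hC hC' hCC').disjoint

theorem IsTubing.exists_mem_maxSubtubes_superset (ht : IsTubing G 𝒯)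
    (hT : (G.induce (T : Set V)).Connected) (hTA : T ⊆ (maxSubtubes 𝒯 A).biUnion id) :
    ∃ C ∈ maxSubtubes 𝒯 A, T ⊆ C :=
  SimpleGraph.exists_subset_of_induce_connected hT hTA fun _ hC _ hC' hCC' =>
    (ht.areSeparated_of_mem_maxSubtubes hC hC' hCC').2

theorem IsTubing.exists_isFree_vertex (hG : G.Connected) (ht : IsTubing G 𝒯)
    (hA : A ∈ insert univ 𝒯) : ∃ v, IsFree 𝒯 A v := by
  by_contra! h
  have hcover : A ⊆ (maxSubtubes 𝒯 A).biUnion id := fun x hx => by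
    obtain ⟨S, hS, hSA, hxS⟩ : ∃ S ∈ 𝒯, S ⊂ A ∧ x ∈ S := by simpa [IsFree, hx] using h x
    obtain ⟨C, hC, hxC⟩ := exists_mem_maxSubtubes hS hSA hxS
    exact mem_biUnion.2 ⟨C, hC, hxC⟩
  obtain ⟨C, hC, hAC⟩ := ht.exists_mem_maxSubtubes_superset (ht.induce_connected hG hA) hcover
  exact (mem_maxSubtubes.1 hC).2.1.2 hAC

theorem IsFree.areCompatible (ht : IsTubing G 𝒯) (hA : A ∈ insert univ 𝒯) (hv : IsFree 𝒯 A v)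
    (hSA : S ⊆ A.erase v) (hS : ∀ x ∈ S, ∀ y ∈ A.erase v, G.Adj x y → y ∈ S) (hT : T ∈ 𝒯)
    (hTS : T ≠ S) : AreCompatible G S T := by
  by_cases hAT : A ⊆ T
  · exact Or.inl ((hSA.trans_ssubset (erase_ssubset hv.1)).trans_subset hAT)
  by_cases hdisj : Disjoint A T
  · exact Or.inr (Or.inr ((ht.areSeparated_of_disjoint hA hT hdisj).mono_left
      (hSA.trans (erase_subset v A))))
  have hTA : T ⊂ A := ((ht.subset_or_subset hA (mem_insert_of_mem hT) hdisj).resolve_left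
    hAT).ssubset_of_not_subset hAT
  have hTv : T ⊆ A.erase v := fun x hx =>
    mem_erase.2 ⟨fun h => hv.2 T hT hTA (h ▸ hx), hTA.1 hx⟩
  by_cases hST : Disjoint S T
  · exact Or.inr (Or.inr ⟨disjoint_left.1 hST, fun x hx y hy hxy =>
      disjoint_left.1 hST (hS x hx y (hTv hy) hxy) hy⟩)
  obtain ⟨t, htS, htT⟩ := not_disjoint_iff.1 hST
  have hTS' : T ⊆ S := coe_subset.1 <| SimpleGraph.subset_of_induce_connected (ht.1 T hT).2.2
    htT htS fun x _ y hy hx hxy => hS x hx y (hTv hy) hxy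
  exact Or.inr (Or.inl (hTS'.ssubset_of_ne hTS))

/-- This is where maximality enters: a second free vertex `v` of `A` would make the component of
`v` in `A \ {u}` a tube compatible with all of `𝒯`. -/
theorem IsMaxTubing.isFree_unique (hmax : IsMaxTubing G 𝒯) (hA : A ∈ insert univ 𝒯)
    (hu : IsFree 𝒯 A u) (hv : IsFree 𝒯 A v) : u = v := by
  by_contra huv
  obtain ⟨S, hSA, hvS, hSconn, hS⟩ :=
    SimpleGraph.exists_induce_connected_closed (G := G) (mem_erase.2 ⟨Ne.symm huv, hv.1⟩)
  have huS : u ∉ S := fun h => (mem_erase.1 (hSA h)).1 rfl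
  have hSnot : S ∉ 𝒯 := fun h => hv.2 S h (hSA.trans_ssubset (erase_ssubset hu.1)) hvS
  have hStube : IsTube G S := ⟨⟨v, hvS⟩, fun h => huS (h ▸ mem_univ u), hSconn⟩
  have hins := hmax.2 _ (hmax.1.insert_of_compatible hStube fun T hT hTS =>
    hu.areCompatible hmax.1 hA hSA hS hT hTS) (subset_insert S 𝒯)
  exact hSnot (hins ▸ mem_insert_self S 𝒯)

theorem IsMaxTubing.erase_eq_biUnion_maxSubtubes (hmax : IsMaxTubing G 𝒯)
    (hA : A ∈ insert univ 𝒯) (hv : IsFree 𝒯 A v) :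
    A.erase v = (maxSubtubes 𝒯 A).biUnion id := by
  ext x
  simp only [mem_erase, mem_biUnion, id]
  constructor
  · rintro ⟨hxv, hxA⟩
    have hx : ¬ IsFree 𝒯 A x := fun hx => hxv (hmax.isFree_unique hA hx hv)
    obtain ⟨S, hS, hSA, hxS⟩ : ∃ S ∈ 𝒯, S ⊂ A ∧ x ∈ S := by simpa [IsFree, hxA] using hx
    exact exists_mem_maxSubtubes hS hSA hxS
  · rintro ⟨C, hC, hxC⟩
    obtain ⟨hC𝒯, hCA, -⟩ := mem_maxSubtubes.1 hC
    exact ⟨fun h => hv.2 C hC𝒯 hCA (h ▸ hxC), hCA.1 hxC⟩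

/-- The total weight `∑ v ∈ A, w v` of a tube `A` of size `k`. -/
def tubeWeight (k : ℕ) : ℤ := if k ≤ 1 then 0 else 3 ^ (k - 2)

theorem tubeWeight_nonneg (k : ℕ) : 0 ≤ tubeWeight k := by
  unfold tubeWeight
  split_ifs <;> positivity

theorem tubeWeight_mono : Monotone tubeWeight := by
  intro a b hab
  unfold tubeWeight
  split_ifs with ha hb hb
  · exact le_rfl
  · positivity
  · omega
  · exact pow_le_pow_right₀ (by norm_num) (by omega)

theorem two_mul_tubeWeight_le (k : ℕ) : 2 * tubeWeight k ≤ tubeWeight (k + 1) := by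
  unfold tubeWeight
  split_ifs with hk hk'
  · simp
  · simp only [mul_zero]; positivity
  · omega
  · rw [show k + 1 - 2 = k - 2 + 1 by omega, pow_succ]
    linarith [pow_pos (show (0 : ℤ) < 3 by norm_num) (k - 2)]

theorem tubeWeight_add_le (a b : ℕ) : tubeWeight a + tubeWeight b ≤ tubeWeight (a + b) := by
  wlog hab : a ≤ b generalizing a b
  · rw [add_comm, add_comm a]
    exact this b a (by omega)
  rcases a.eq_zero_or_pos with rfl | ha
  · simp [tubeWeight]
  calc tubeWeight a + tubeWeight b ≤ 2 * tubeWeight b := by linarith [tubeWeight_mono hab]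
    _ ≤ tubeWeight (b + 1) := two_mul_tubeWeight_le b
    _ ≤ tubeWeight (a + b) := tubeWeight_mono (by omega)

theorem sum_tubeWeight_le {ι : Type*} (s : Finset ι) (c : ι → ℕ) :
    ∑ i ∈ s, tubeWeight (c i) ≤ tubeWeight (∑ i ∈ s, c i) := by
  have := le_sum_of_subadditive (fun k => -tubeWeight k) (by simp [tubeWeight])
    (fun a b => by linarith [tubeWeight_add_le a b]) s c
  simpa only [sum_neg_distrib, neg_le_neg_iff] using this

namespace IsWeightVector

variable {w : V → ℤ}

theorem sum_eq (hG : G.Connected) (ht : IsTubing G 𝒯) (hw : IsWeightVector 𝒯 w)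
    (hA : A ∈ insert univ 𝒯) : ∑ x ∈ A, w x = tubeWeight A.card := by
  obtain ⟨v, hv⟩ := ht.exists_isFree_vertex hG hA
  obtain ⟨hsingle, hrec⟩ := hw v A hA hv.1 fun B hB hvB => hv.subset_of_mem ht hA hB hvB
  rw [← sum_erase_add A w hv.1]
  by_cases hA2 : 2 ≤ A.card
  · rw [hrec hA2, tubeWeight, if_neg (by omega)]
    ring
  · have hAv : A = {v} := eq_singleton_iff_unique_mem.2
      ⟨hv.1, fun x hx => card_le_one.1 (by omega) x hx v hv.1⟩
    rw [hsingle hAv, hAv]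
    simp [tubeWeight]

theorem sum_erase_le (hG : G.Connected) (hmax : IsMaxTubing G 𝒯) (hw : IsWeightVector 𝒯 w)
    (hA : A ∈ insert univ 𝒯) (hv : IsFree 𝒯 A v) :
    ∑ x ∈ A.erase v, w x ≤ tubeWeight (A.card - 1) := by
  have hcover := hmax.erase_eq_biUnion_maxSubtubes hA hv
  have hdisj := hmax.1.pairwiseDisjoint_maxSubtubes (A := A)
  calc ∑ x ∈ A.erase v, w x = ∑ C ∈ maxSubtubes 𝒯 A, ∑ x ∈ C, w x := by
        rw [hcover, sum_biUnion hdisj]; rfl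
    _ = ∑ C ∈ maxSubtubes 𝒯 A, tubeWeight C.card := sum_congr rfl fun C hC =>
        hw.sum_eq hG hmax.1 (mem_insert_of_mem (mem_maxSubtubes.1 hC).1)
    _ ≤ tubeWeight (∑ C ∈ maxSubtubes 𝒯 A, C.card) := sum_tubeWeight_le _ _
    _ = tubeWeight (A.card - 1) := by rw [← card_erase_of_mem hv.1, hcover, card_biUnion hdisj]; rfl

theorem le_apply (hG : G.Connected) (hmax : IsMaxTubing G 𝒯) (hw : IsWeightVector 𝒯 w)
    (hA : A ∈ insert univ 𝒯) (hv : IsFree 𝒯 A v) : tubeWeight (A.card - 1) ≤ w v := by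
  have hsum := hw.sum_eq hG hmax.1 hA
  rw [← sum_erase_add A w hv.1] at hsum
  have hdouble := two_mul_tubeWeight_le (A.card - 1)
  rw [Nat.sub_add_cancel (card_pos.2 ⟨v, hv.1⟩)] at hdouble
  linarith [hw.sum_erase_le hG hmax hA hv]

theorem nonneg (hG : G.Connected) (hmax : IsMaxTubing G 𝒯) (hw : IsWeightVector 𝒯 w) (v : V) :
    0 ≤ w v := by
  obtain ⟨A, hA, hv⟩ := hmax.1.exists_isFree_tube v
  exact (tubeWeight_nonneg _).trans (hw.le_apply hG hmax hA hv)

theorem tubeWeight_card_le_sum (hG : G.Connected) (hmax : IsMaxTubing G 𝒯)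
    (hw : IsWeightVector 𝒯 w) (hT : (G.induce (T : Set V)).Connected) :
    tubeWeight T.card ≤ ∑ x ∈ T, w x := by
  obtain ⟨⟨t, htT⟩⟩ := hT.nonempty
  obtain ⟨A, hA, hTA, hAmin⟩ := hmax.1.exists_minimal_superset ⟨t, htT⟩
  obtain ⟨u, hu⟩ := hmax.1.exists_isFree_vertex hG hA
  have huT : u ∈ T := by
    by_contra huT
    have hcover : T ⊆ (maxSubtubes 𝒯 A).biUnion id := by
      rw [← hmax.erase_eq_biUnion_maxSubtubes hA hu]
      exact fun x hx => mem_erase.2 ⟨by rintro rfl; exact huT hx, hTA hx⟩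
    obtain ⟨C, hC, hTC⟩ := hmax.1.exists_mem_maxSubtubes_superset hT hcover
    obtain ⟨hC𝒯, hCA, -⟩ := mem_maxSubtubes.1 hC
    exact hCA.2 (hAmin C (mem_insert_of_mem hC𝒯) hTC)
  rcases hTA.eq_or_ssubset with rfl | hTA'
  · exact (hw.sum_eq hG hmax.1 hA).ge
  calc tubeWeight T.card ≤ tubeWeight (A.card - 1) :=
        tubeWeight_mono (by have := card_lt_card hTA'; omega)
    _ ≤ w u := hw.le_apply hG hmax hA hu
    _ ≤ ∑ x ∈ T, w x := single_le_sum (fun x _ => hw.nonneg hG hmax x) huT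

end IsWeightVector

theorem maxSubtubes_eq_filter_parent {σ : Finset V → Finset V}
    (hσ : ∀ T ∈ 𝒯, σ T ∈ insert univ 𝒯 ∧ T ⊂ σ T ∧ ∀ S ∈ insert univ 𝒯, T ⊂ S → σ T ⊆ S)
    (hB : B ∈ insert univ 𝒯) : maxSubtubes 𝒯 B = 𝒯.filter (σ · = B) := by
  ext T
  rw [mem_maxSubtubes, mem_filter]
  constructor
  · rintro ⟨hT, hTB, hTmax⟩
    obtain ⟨hσmem, hTσ, hσmin⟩ := hσ T hT
    have hσB := hσmin B hB hTB
    refine ⟨hT, hσB.antisymm (not_not.1 fun hBσ => ?_)⟩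
    have hσ𝒯 : σ T ∈ 𝒯 :=
      (mem_insert.1 hσmem).resolve_left fun h => hBσ (h ▸ subset_univ B)
    exact hTmax (σ T) hσ𝒯 hTσ (hσB.ssubset_of_not_subset hBσ)
  · rintro ⟨hT, rfl⟩
    obtain ⟨-, hTσ, hσmin⟩ := hσ T hT
    exact ⟨hT, hTσ, fun S hS hTS hSσ => hSσ.2 (hσmin S (mem_insert_of_mem hS) hTS)⟩

theorem IsMaxTubing.eq_sum_mul_indic_sub (hmax : IsMaxTubing G 𝒯) {vT : Finset V → V}
    (hvT : ∀ T ∈ insert univ 𝒯, IsFree 𝒯 T (vT T)) {σ : Finset V → Finset V}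
    (hσ : ∀ T ∈ 𝒯, σ T ∈ insert univ 𝒯 ∧ T ⊂ σ T ∧ ∀ S ∈ insert univ 𝒯, T ⊂ S → σ T ⊆ S)
    {d : V → ℤ} (hd : ∑ v, d v = 0) (u : V) :
    d u = ∑ T ∈ 𝒯, (∑ v ∈ T, d v) * (indic (vT T) u - indic (vT (σ T)) u) := by
  obtain ⟨B, hB, huB⟩ := hmax.1.exists_isFree_tube u
  have hvT_eq : ∀ T ∈ insert univ 𝒯, u = vT T ↔ T = B := fun T hT =>
    ⟨fun h => hmax.1.eq_of_isFree hT hB (h ▸ hvT T hT) huB,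
      by rintro rfl; exact hmax.isFree_unique hT huB (hvT T hT)⟩
  have hfree : ∑ T ∈ 𝒯, (∑ v ∈ T, d v) * indic (vT T) u =
      ∑ T ∈ 𝒯.filter (· = B), ∑ v ∈ T, d v := by
    simp only [indic, mul_ite, mul_one, mul_zero, sum_filter]
    exact sum_congr rfl fun T hT => if_congr (hvT_eq T (mem_insert_of_mem hT)) rfl rfl
  have hparent : ∑ T ∈ 𝒯, (∑ v ∈ T, d v) * indic (vT (σ T)) u = ∑ v ∈ B.erase u, d v := by
    rw [hmax.erase_eq_biUnion_maxSubtubes hB huB, sum_biUnion hmax.1.pairwiseDisjoint_maxSubtubes,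
      maxSubtubes_eq_filter_parent hσ hB]
    simp only [indic, mul_ite, mul_one, mul_zero, sum_filter, id]
    exact sum_congr rfl fun T hT => if_congr (hvT_eq _ (hσ T hT).1) rfl rfl
  have hsplit := add_sum_erase B d huB.1
  simp only [mul_sub, sum_sub_distrib, hfree, hparent, filter_eq']
  rcases mem_insert.1 hB with rfl | hB𝒯
  · rw [if_neg fun h => (hmax.1.1 _ h).2.1 rfl, sum_empty]
    linarith
  · rw [if_pos hB𝒯, sum_singleton]
    linarith

theorem weight_vector_difference_decomposition
    (G : SimpleGraph V) (hG : G.Connected)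
    (𝒯 𝒯' : Finset (Finset V)) (h : IsMaxTubing G 𝒯) (h' : IsMaxTubing G 𝒯')
    (w w' : V → ℤ) (hw : IsWeightVector 𝒯 w) (hw' : IsWeightVector 𝒯' w')
    (vT : Finset V → V)
    (hvT : ∀ T ∈ insert Finset.univ 𝒯,
      vT T ∈ T ∧ ∀ S ∈ 𝒯, S ⊂ T → vT T ∉ S)
    (σ : Finset V → Finset V)
    (hσ : ∀ T ∈ 𝒯, σ T ∈ insert Finset.univ 𝒯 ∧ T ⊂ σ T ∧
      ∀ S ∈ insert Finset.univ 𝒯, T ⊂ S → σ T ⊆ S) :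
    (∀ T ∈ 𝒯, 0 ≤ ∑ v ∈ T, (w' v - w v)) ∧
    ∀ u : V,
      w' u - w u =
        ∑ T ∈ 𝒯, (∑ v ∈ T, (w' v - w v)) *
          (indic (vT T) u - indic (vT (σ T)) u) := by
  have htotal : ∑ v, (w' v - w v) = 0 := by
    rw [sum_sub_distrib, hw'.sum_eq hG h'.1 (mem_insert_self _ _),
      hw.sum_eq hG h.1 (mem_insert_self _ _), sub_self]
  refine ⟨fun T hT => ?_, h.eq_sum_mul_indic_sub hvT hσ htotal⟩
  rw [sum_sub_distrib, hw.sum_eq hG h.1 (mem_insert_of_mem hT), sub_nonneg]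
  exact hw'.tubeWeight_card_le_sum hG h' (h.1.1 T hT).2.2
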